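/- arXiv:1907.13256 — 4 statements merged into one kernel-verified Lean document; each statement's English description precedes it below -/
import Mathlib

section
/- Let L be an even unimodular lattice containing U ⊕ U as an orthogonal direct summand, and let Λ = L ⊕ ℤe be the orthogonal direct sum with q(e) = −2. If z ∈ Λ is primitive with δ(z) = 0 in the discriminant group Λ*/Λ and q(z) < 0, then there exists γ ∈ Õ(Λ) with γ(z) ∈ L, and the rank-2 sublattice spanned by γ(z) and e is negative definite. -/
open LinearMap (BilinForm)

/-- A vector of a `ℤ`-module is primitive if `v = m • w` forces `m = ±1`. -/
def IsPrimitiveVec {M : Type*} [AddCommGroup M] [Module ℤ M] (v : M) : Prop :=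
  ∀ (m : ℤ) (w : M), v = m • w → m = 1 ∨ m = -1

/-- The bilinear form is symmetric. -/
def IsSymmForm {M : Type*} [AddCommGroup M] [Module ℤ M] (B : BilinForm ℤ M) : Prop :=
  ∀ x y : M, B x y = B y x

/-- The lattice is even: every square `q(v) = B v v` is even. -/
def IsEvenForm {M : Type*} [AddCommGroup M] [Module ℤ M] (B : BilinForm ℤ M) : Prop :=
  ∀ x : M, Even (B x x)

/-- The lattice is unimodular: `v ↦ B v ·` is an isomorphism onto the dual module. -/
def IsUnimodularForm {M : Type*} [AddCommGroup M] [Module ℤ M] (B : BilinForm ℤ M) : Prop :=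
  Function.Bijective fun v : M => B v

/-- The lattice is nondegenerate. -/
def IsNondegForm {M : Type*} [AddCommGroup M] [Module ℤ M] (B : BilinForm ℤ M) : Prop :=
  ∀ v : M, (∀ w : M, B v w = 0) → v = 0

/-- The lattice contains `U ⊕ U` (two orthogonal hyperbolic planes) as an orthogonal
direct summand; since `U ⊕ U` is unimodular this is equivalent to containing vectors
with the appropriate Gram matrix. -/
def ContainsUU {M : Type*} [AddCommGroup M] [Module ℤ M] (B : BilinForm ℤ M) : Prop :=
  ∃ u₁ u₂ u₃ u₄ : M,
    B u₁ u₁ = 0 ∧ B u₂ u₂ = 0 ∧ B u₁ u₂ = 1 ∧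
    B u₃ u₃ = 0 ∧ B u₄ u₄ = 0 ∧ B u₃ u₄ = 1 ∧
    B u₁ u₃ = 0 ∧ B u₁ u₄ = 0 ∧ B u₂ u₃ = 0 ∧ B u₂ u₄ = 0

/-- `d` is the divisibility of `z`: the nonnegative generator of the ideal
`{B z w : w ∈ Λ}` of `ℤ`. -/
def IsDivisibility {M : Type*} [AddCommGroup M] [Module ℤ M]
    (B : BilinForm ℤ M) (z : M) (d : ℤ) : Prop :=
  0 ≤ d ∧ (∀ w : M, d ∣ B z w) ∧ ∀ d' : ℤ, (∀ w : M, d' ∣ B z w) → d' ∣ d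

/-- `γ` belongs to the stable orthogonal group `Õ(Λ)`: it is an isometry acting
trivially on the discriminant group `Λ*/Λ`.  For a nondegenerate lattice the dual
lattice `Λ*` is identified with `Hom(Λ, ℤ)` via `v ↦ B(v,·)`, under which `Λ ⊂ Λ*`
becomes the image of `B`; triviality on the discriminant says that for every
functional `f` the difference `f ∘ γ - f` is of the form `B x ·` for some `x ∈ Λ`. -/
def IsStableIsometry {M : Type*} [AddCommGroup M] [Module ℤ M]
    (B : BilinForm ℤ M) (γ : M ≃ₗ[ℤ] M) : Prop :=
  (∀ v w : M, B (γ v) (γ w) = B v w) ∧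
  ∀ f : M →ₗ[ℤ] ℤ, ∃ x : M, ∀ w : M, f (γ w) - f w = B x w

/-- The rank-2 sublattice spanned by `u` and `v` is negative definite. -/
def NegDefPair {M : Type*} [AddCommGroup M] [Module ℤ M]
    (B : BilinForm ℤ M) (u v : M) : Prop :=
  LinearIndependent ℤ ![u, v] ∧
  ∀ w ∈ Submodule.span ℤ ({u, v} : Set M), w ≠ 0 → B w w < 0

/-- The rank-2 sublattice spanned by `u` and `v` is negative semidefinite. -/
def NegSemidefPair {M : Type*} [AddCommGroup M] [Module ℤ M]
    (B : BilinForm ℤ M) (u v : M) : Prop :=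
  LinearIndependent ℤ ![u, v] ∧
  ∀ w ∈ Submodule.span ℤ ({u, v} : Set M), B w w ≤ 0

/-- The Gram determinant of a pair of vectors. -/
def GramDet {M : Type*} [AddCommGroup M] [Module ℤ M]
    (B : BilinForm ℤ M) (u v : M) : ℤ :=
  B u u * B v v - (B u v) ^ 2

/-- The orthogonal direct sum `Λ = L ⊕ ℤe` with `q(e) = -t`, realized on `L × ℤ`
with `e = (0, 1)`. -/
def prodForm {L : Type*} [AddCommGroup L] [Module ℤ L]
    (B : BilinForm ℤ L) (t : ℤ) : BilinForm ℤ (L × ℤ) :=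
  LinearMap.mk₂ ℤ (fun v w => B v.1 w.1 - t * v.2 * w.2)
    (fun v v' w => by simp; ring)
    (fun c v w => by simp; ring)
    (fun v w w' => by simp; ring)
    (fun c v w => by simp; ring)

/-- The lattice contains the hyperbolic plane `U` as an orthogonal direct summand;
since `U` is unimodular this is equivalent to containing two vectors with the
hyperbolic Gram matrix. -/
def ContainsU {M : Type*} [AddCommGroup M] [Module ℤ M] (B : BilinForm ℤ M) : Prop :=
  ∃ u₁ u₂ : M, B u₁ u₁ = 0 ∧ B u₂ u₂ = 0 ∧ B u₁ u₂ = 1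

/-! ### Auxiliary integer lemmas -/

lemma prime_int_not_unit {ρ : ℕ} (hρ : ρ.Prime) : ¬ IsUnit (ρ : ℤ) := by
  rw [Int.isUnit_iff]; have := hρ.two_le; omega

lemma coprime_no_common_prime {a b : ℤ} (h : IsCoprime a b) {ρ : ℕ} (hρ : ρ.Prime)
    (ha : (ρ:ℤ) ∣ a) (hb : (ρ:ℤ) ∣ b) : False :=
  prime_int_not_unit hρ (h.isUnit_of_dvd' ha hb)

lemma exists_prod_primes (N : ℤ) (hN : N ≠ 0) (P : ℕ → Prop) [DecidablePred P] :
    ∃ k : ℤ, ∀ ρ : ℕ, ρ.Prime → ((ρ:ℤ) ∣ k ↔ ((ρ:ℤ) ∣ N ∧ P ρ)) := by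
  refine ⟨((N.natAbs.primeFactors.filter P).prod id : ℕ), fun ρ hρ => ?_⟩
  rw [Int.natCast_dvd_natCast]
  constructor
  · intro hk
    obtain ⟨a, ha, hρa⟩ := hρ.prime.exists_mem_finset_dvd hk
    rw [Finset.mem_filter] at ha
    obtain ⟨ha1, ha2⟩ := ha
    rw [Nat.mem_primeFactors] at ha1
    have : ρ = a := ((Nat.prime_dvd_prime_iff_eq hρ ha1.1).mp hρa)
    subst this
    exact ⟨Int.natCast_dvd.mpr ha1.2.1, ha2⟩
  · rintro ⟨h1, h2⟩
    refine Finset.dvd_prod_of_mem id (Finset.mem_filter.mpr ⟨?_, h2⟩)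
    exact Nat.mem_primeFactors.mpr ⟨hρ, Int.natCast_dvd.mp h1, Int.natAbs_ne_zero.mpr hN⟩

lemma lemA (p g N : ℤ) (hN : N ≠ 0) (h : IsCoprime p g) :
    ∃ k : ℤ, IsCoprime (p + k * g) N := by
  classical
  obtain ⟨k, hk⟩ := exists_prod_primes N hN (fun ρ => ¬ (ρ:ℤ) ∣ p)
  refine ⟨k, ?_⟩
  rw [Int.isCoprime_iff_gcd_eq_one]
  by_contra hne
  obtain ⟨ρ, hρ, hρd⟩ := Nat.exists_prime_and_dvd hne
  have h1 : (ρ:ℤ) ∣ p + k * g := dvd_trans (Int.natCast_dvd_natCast.mpr hρd) (Int.gcd_dvd_left _ _)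
  have h2 : (ρ:ℤ) ∣ N := dvd_trans (Int.natCast_dvd_natCast.mpr hρd) (Int.gcd_dvd_right _ _)
  have hρi : Prime (ρ:ℤ) := Nat.prime_iff_prime_int.mp hρ
  by_cases hp : (ρ:ℤ) ∣ p
  · have hknot : ¬ (ρ:ℤ) ∣ k := fun hc => ((hk ρ hρ).1 hc).2 hp
    have hkg : (ρ:ℤ) ∣ k * g := by
      have := dvd_sub h1 hp; simpa using this
    rcases hρi.dvd_mul.mp hkg with hc | hc
    · exact hknot hc
    · exact coprime_no_common_prime h hρ hp hc
  · have hkd : (ρ:ℤ) ∣ k := (hk ρ hρ).2 ⟨h2, hp⟩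
    refine hp ?_
    have h3 : (ρ:ℤ) ∣ k * g := hkd.mul_right g
    have := dvd_sub h1 h3
    simpa using this

lemma lemE (p₁ q₁ p₂ q₂ : ℤ) (h : IsCoprime p₁ q₁) :
    ∃ x y σ τ : ℤ, σ * (x * p₁ - y * q₂) + τ * (y * q₁ + x * p₂) = 1 := by
  classical
  by_cases hK : p₁ * q₁ + p₂ * q₂ = 0
  · by_cases hq₂ : q₂ = 0
    · have hpq : p₁ * q₁ = 0 := by rw [hq₂] at hK; linarith
      rcases mul_eq_zero.mp hpq with h1 | h1
      · have hu : IsUnit q₁ := by rw [h1] at h; exact isCoprime_zero_left.mp h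
        refine ⟨0, 1, 0, q₁, ?_⟩
        rcases Int.isUnit_iff.mp hu with h2 | h2 <;> rw [h2] <;> ring
      · have hu : IsUnit p₁ := by rw [h1] at h; exact isCoprime_zero_right.mp h
        refine ⟨1, 0, p₁, 0, ?_⟩
        rcases Int.isUnit_iff.mp hu with h2 | h2 <;> rw [h2] <;> ring
    · set dn : ℕ := Int.gcd q₁ q₂ with hdn
      have hdpos : 0 < dn := Int.gcd_pos_of_ne_zero_right q₁ hq₂
      set d : ℤ := (dn : ℤ) with hd
      have hd0 : d ≠ 0 := by positivity
      obtain ⟨q₁', hq₁'⟩ : d ∣ q₁ := Int.gcd_dvd_left _ _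
      obtain ⟨q₂', hq₂'⟩ : d ∣ q₂ := Int.gcd_dvd_right _ _
      have hco' : IsCoprime q₁' q₂' := by
        rw [Int.isCoprime_iff_gcd_eq_one]
        have h1 : q₁ / d = q₁' := by rw [hq₁']; exact Int.mul_ediv_cancel_left _ hd0
        have h2 : q₂ / d = q₂' := by rw [hq₂']; exact Int.mul_ediv_cancel_left _ hd0
        rw [← h1, ← h2]
        exact Int.gcd_div_gcd_div_gcd hdpos
      have key : d * (p₁ * q₁' + p₂ * q₂') = 0 := by
        rw [hq₁', hq₂'] at hK; linarith [hK]
      have key2 : p₁ * q₁' = -(p₂ * q₂') := by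
        rcases mul_eq_zero.mp key with hc | hc
        · exact absurd hc hd0
        · linarith
      have hq₂'0 : q₂' ≠ 0 := fun hc => hq₂ (by rw [hq₂', hc, mul_zero])
      have hdvd : q₂' ∣ p₁ := by
        have h1 : q₂' ∣ p₁ * q₁' := ⟨-p₂, by linarith [key2]⟩
        exact hco'.symm.dvd_of_dvd_mul_right h1
      obtain ⟨m, hm⟩ := hdvd
      have hp₂ : p₂ = -(m * q₁') := by
        have h1 : q₂' * (m * q₁') = q₂' * (-p₂) := by
          rw [hm] at key2; linarith [key2]
        have := mul_left_cancel₀ hq₂'0 h1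
        linarith
      have hmd : IsCoprime m d := by
        have h1 : IsCoprime m q₁ := h.of_isCoprime_of_dvd_left ⟨q₂', by rw [hm]; ring⟩
        exact h1.of_isCoprime_of_dvd_right ⟨q₁', hq₁'⟩
      obtain ⟨x, y', hxy⟩ := hmd
      obtain ⟨σ, τ', hστ⟩ := hco'.symm
      refine ⟨x, -y', σ, -τ', ?_⟩
      rw [hm, hp₂, hq₁', hq₂']
      linear_combination (σ * q₂' + τ' * q₁') * hxy + hστ
  · obtain ⟨x, hx⟩ := exists_prod_primes _ hK (fun ρ => (ρ:ℤ) ∣ p₁ ∧ ¬ (ρ:ℤ) ∣ p₂)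
    obtain ⟨y, hy⟩ := exists_prod_primes _ hK (fun ρ => ¬ (ρ:ℤ) ∣ p₁)
    suffices hco : IsCoprime (x * p₁ - y * q₂) (y * q₁ + x * p₂) by
      obtain ⟨σ, τ, hστ⟩ := hco; exact ⟨x, y, σ, τ, hστ⟩
    rw [Int.isCoprime_iff_gcd_eq_one]
    by_contra hne
    obtain ⟨ρ, hρ, hρd⟩ := Nat.exists_prime_and_dvd hne
    have hρi : Prime (ρ:ℤ) := Nat.prime_iff_prime_int.mp hρ
    have hf : (ρ:ℤ) ∣ x * p₁ - y * q₂ :=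
      dvd_trans (Int.natCast_dvd_natCast.mpr hρd) (Int.gcd_dvd_left _ _)
    have hg : (ρ:ℤ) ∣ y * q₁ + x * p₂ :=
      dvd_trans (Int.natCast_dvd_natCast.mpr hρd) (Int.gcd_dvd_right _ _)
    have hxK : (ρ:ℤ) ∣ x * (p₁ * q₁ + p₂ * q₂) := by
      have hid : q₁ * (x*p₁ - y*q₂) + q₂ * (y*q₁ + x*p₂) = x * (p₁*q₁ + p₂*q₂) := by ring
      rw [← hid]; exact dvd_add (hf.mul_left q₁) (hg.mul_left q₂)
    have hρK : (ρ:ℤ) ∣ (p₁*q₁ + p₂*q₂) := by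
      by_contra hn
      have hx' : (ρ:ℤ) ∣ x := (hρi.dvd_mul.mp hxK).resolve_right hn
      exact hn ((hx ρ hρ).mp hx').1
    by_cases hp1 : (ρ:ℤ) ∣ p₁
    · have hq1 : ¬ (ρ:ℤ) ∣ q₁ := fun hc => coprime_no_common_prime h hρ hp1 hc
      have hynot : ¬ (ρ:ℤ) ∣ y := fun hc => ((hy ρ hρ).mp hc).2 hp1
      have hyq₁ : ¬ (ρ:ℤ) ∣ y * q₁ := fun hc => by
        rcases hρi.dvd_mul.mp hc with hc' | hc'
        exacts [hynot hc', hq1 hc']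
      by_cases hp2 : (ρ:ℤ) ∣ p₂
      · have hcon : (ρ:ℤ) ∣ y * q₁ := by
          have := dvd_sub hg (hp2.mul_left x); simpa using this
        exact hyq₁ hcon
      · have hx' : (ρ:ℤ) ∣ x := (hx ρ hρ).mpr ⟨hρK, hp1, hp2⟩
        have hcon : (ρ:ℤ) ∣ y * q₁ := by
          have := dvd_sub hg (hx'.mul_right p₂); simpa using this
        exact hyq₁ hcon
    · have hy' : (ρ:ℤ) ∣ y := (hy ρ hρ).mpr ⟨hρK, hp1⟩
      have hxnot : ¬ (ρ:ℤ) ∣ x := fun hc => hp1 ((hx ρ hρ).mp hc).2.1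
      have hcon : (ρ:ℤ) ∣ x * p₁ := by
        have := dvd_add hf (hy'.mul_right q₂); simpa using this
      rcases hρi.dvd_mul.mp hcon with hc | hc
      exacts [hxnot hc, hp1 hc]

/-! ### Eichler transvections -/

section Transvection

variable {M : Type*} [AddCommGroup M]
variable (C : BilinForm ℤ M)

/-- Eichler transvection as a linear map. -/
def tvAux (u x : M) (ν : ℤ) : M →ₗ[ℤ] M :=
  LinearMap.id + (C u).smulRight x - ((C x) + ν • (C u)).smulRight u

lemma tvAux_apply (u x : M) (ν : ℤ) (w : M) :
    tvAux C u x ν w = w + (C u w) • x - ((C x w) + ν * (C u w)) • u := rfl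

/-- pairing of a fixed vector against a `tvAux`-image. -/
lemma pair_tvAux (u x : M) (ν : ℤ) (y w : M) :
    C y (tvAux C u x ν w)
      = C y w + (C u w) * (C y x) - ((C x w) + ν * (C u w)) * (C y u) := by
  rw [tvAux_apply]
  simp only [map_add, map_sub, map_smul, smul_eq_mul]

/-- pairing of a `tvAux`-image against a fixed vector. -/
lemma tvAux_pair (u x : M) (ν : ℤ) (y w : M) :
    C (tvAux C u x ν w) y
      = C w y + (C u w) * (C x y) - ((C x w) + ν * (C u w)) * (C u y) := by
  rw [tvAux_apply]
  simp only [map_add, map_sub, map_smul, LinearMap.add_apply, LinearMap.sub_apply,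
    LinearMap.smul_apply, smul_eq_mul]

lemma tv_comp_aux (hsC : ∀ a b, C a b = C b a) (u x : M) (ν : ℤ)
    (hu : C u u = 0) (hux : C u x = 0) (hν : C x x = 2 * ν) (w : M) :
    tvAux C u (-x) ν (tvAux C u x ν w) = w := by
  have hxu : C x u = 0 := by rw [hsC x u]; exact hux
  have h1 : C u (tvAux C u x ν w) = C u w := by
    rw [pair_tvAux, hux, hu]; ring
  have h2 : C (-x) (tvAux C u x ν w) = -(C x w) - 2 * ν * (C u w) := by
    rw [map_neg, LinearMap.neg_apply, pair_tvAux, hν, hxu]; ring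
  rw [tvAux_apply C u (-x), h1, h2, tvAux_apply]
  have h3 : (-(C x w) - 2*ν*(C u w) + ν * (C u w)) = -((C x w) + ν * (C u w)) := by ring
  rw [h3, neg_smul, smul_neg]
  abel

lemma tv_comp_aux' (hsC : ∀ a b, C a b = C b a) (u x : M) (ν : ℤ)
    (hu : C u u = 0) (hux : C u x = 0) (hν : C x x = 2 * ν) (w : M) :
    tvAux C u x ν (tvAux C u (-x) ν w) = w := by
  have hxu : C x u = 0 := by rw [hsC x u]; exact hux
  have hux' : C u (-x) = 0 := by rw [map_neg, hux, neg_zero]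
  have hneg : ∀ v : M, C (-x) v = -(C x v) := by
    intro v; rw [map_neg C, LinearMap.neg_apply]
  have h1 : C u (tvAux C u (-x) ν w) = C u w := by
    rw [pair_tvAux, hux', hu]; ring
  have h2 : C x (tvAux C u (-x) ν w) = C x w - 2 * ν * (C u w) := by
    rw [pair_tvAux, map_neg (C x), hxu, hneg, hν]; ring
  rw [tvAux_apply C u x, h1, h2, tvAux_apply, hneg]
  have h3 : (C x w - 2*ν*(C u w) + ν * (C u w)) = ((C x w) - ν * (C u w)) := by ring
  have h4 : (-(C x w) + ν * (C u w)) = -((C x w) - ν * (C u w)) := by ring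
  rw [h3, h4, neg_smul, smul_neg]
  abel

/-- Eichler transvection as a linear equivalence. -/
def tv (hsC : ∀ a b, C a b = C b a) (u x : M) (ν : ℤ)
    (hu : C u u = 0) (hux : C u x = 0) (hν : C x x = 2 * ν) : M ≃ₗ[ℤ] M :=
  LinearEquiv.ofLinear (tvAux C u x ν) (tvAux C u (-x) ν)
    (LinearMap.ext fun w => by
      simpa using tv_comp_aux' C hsC u x ν hu hux hν w)
    (LinearMap.ext fun w => by
      simpa using tv_comp_aux C hsC u x ν hu hux hν w)

lemma tv_coe (hsC : ∀ a b, C a b = C b a) (u x : M) (ν : ℤ)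
    (hu : C u u = 0) (hux : C u x = 0) (hν : C x x = 2 * ν) (w : M) :
    tv C hsC u x ν hu hux hν w = tvAux C u x ν w := rfl

lemma tv_isom (hsC : ∀ a b, C a b = C b a) (u x : M) (ν : ℤ)
    (hu : C u u = 0) (hux : C u x = 0) (hν : C x x = 2 * ν) (w w' : M) :
    C (tv C hsC u x ν hu hux hν w) (tv C hsC u x ν hu hux hν w') = C w w' := by
  have hxu : C x u = 0 := by rw [hsC x u]; exact hux
  rw [tv_coe, tv_coe, tvAux_pair, pair_tvAux, pair_tvAux, pair_tvAux,
    hu, hux, hxu, hν, hsC w x, hsC w u]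
  ring

lemma tv_stable (hsC : ∀ a b, C a b = C b a) (u x : M) (ν : ℤ)
    (hu : C u u = 0) (hux : C u x = 0) (hν : C x x = 2 * ν) (f : M →ₗ[ℤ] ℤ) :
    ∃ x₀ : M, ∀ w : M, f (tv C hsC u x ν hu hux hν w) - f w = C x₀ w := by
  refine ⟨(f x - ν * f u) • u - (f u) • x, fun w => ?_⟩
  rw [tv_coe, tvAux_apply]
  simp only [map_add, map_sub, map_smul, LinearMap.sub_apply, LinearMap.smul_apply,
    smul_eq_mul]
  rw [hsC u w, hsC x w]
  ring

/-- composing isometries with trivial discriminant action -/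
lemma comp_isom_stable (T₁ T₂ : M ≃ₗ[ℤ] M)
    (h₁ : ∀ a b, C (T₁ a) (T₁ b) = C a b) (h₂ : ∀ a b, C (T₂ a) (T₂ b) = C a b)
    (hs₁ : ∀ f : M →ₗ[ℤ] ℤ, ∃ x₀, ∀ w, f (T₁ w) - f w = C x₀ w)
    (hs₂ : ∀ f : M →ₗ[ℤ] ℤ, ∃ x₀, ∀ w, f (T₂ w) - f w = C x₀ w) :
    (∀ a b, C ((T₁.trans T₂) a) ((T₁.trans T₂) b) = C a b) ∧
    (∀ f : M →ₗ[ℤ] ℤ, ∃ x₀, ∀ w, f ((T₁.trans T₂) w) - f w = C x₀ w) := by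
  constructor
  · intro a b
    rw [LinearEquiv.trans_apply, LinearEquiv.trans_apply, h₂, h₁]
  · intro f
    obtain ⟨x₂, hx₂⟩ := hs₂ f
    obtain ⟨x₁, hx₁⟩ := hs₁ f
    refine ⟨T₁.symm x₂ + x₁, fun w => ?_⟩
    have e1 : C (T₁.symm x₂) w = C x₂ (T₁ w) := by
      have := h₁ (T₁.symm x₂) w
      rw [LinearEquiv.apply_symm_apply] at this
      rw [← this]
    rw [LinearEquiv.trans_apply]
    have : f (T₂ (T₁ w)) - f w = (f (T₂ (T₁ w)) - f (T₁ w)) + (f (T₁ w) - f w) := by ring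
    rw [this, hx₂ (T₁ w), hx₁ w, map_add, LinearMap.add_apply, e1]

/-- The "dirty move": one transvection making the two pairings with a hyperbolic
pair coprime, assuming the second pairing is nonzero. -/
lemma dirty (hsC : ∀ a b : M, C a b = C b a) (hevenC : ∀ w : M, Even (C w w))
    (U F : M) (hUU0 : C U U = 0) (hFF : C F F = 0) (hUF : C U F = 1) (hFU : C F U = 1)
    (z wc : M) (hwc : C z wc = 1) (hq : C F z ≠ 0) :
    ∃ T : M ≃ₗ[ℤ] M, (∀ a b, C (T a) (T b) = C a b) ∧
      (∀ f : M →ₗ[ℤ] ℤ, ∃ x₀, ∀ w, f (T w) - f w = C x₀ w) ∧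
      IsCoprime (C U (T z)) (C F (T z)) := by
  classical
  set p₁ : ℤ := C U z with hp₁
  set q₁ : ℤ := C F z with hq₁
  set μ : ℤ := C F wc with hμ
  set η : ℤ := C U wc with hη
  have hcop : IsCoprime p₁ (μ * p₁ - 1) := ⟨μ, -1, by ring⟩
  obtain ⟨k, hk⟩ := lemA p₁ (μ * p₁ - 1) q₁ hq hcop
  obtain ⟨ε, hε⟩ := hevenC wc
  set x : M := k • (wc - μ • U) with hx
  have hCFx : C F x = 0 := by
    rw [hx]
    simp only [map_smul, map_sub, smul_eq_mul, hFU]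
    rw [← hμ]; ring
  have hCUx : C U x = k * η := by
    rw [hx]
    simp only [map_smul, map_sub, smul_eq_mul, hUU0]
    rw [← hη]; ring
  have hCxz : C x z = k * (1 - μ * p₁) := by
    rw [hx]
    have h1 : C wc z = 1 := by rw [hsC wc z]; exact hwc
    simp only [map_smul, LinearMap.smul_apply, map_sub, LinearMap.sub_apply, smul_eq_mul]
    rw [h1]
  set ν : ℤ := k * k * (ε - μ * η) with hν'
  have hνx : C x x = 2 * ν := by
    have hη2 : C wc U = η := by rw [hsC wc U]
    rw [hx]
    simp only [map_smul, LinearMap.smul_apply, map_sub, LinearMap.sub_apply, smul_eq_mul]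
    rw [hUU0, hε, hη2, ← hη, hν']
    ring
  refine ⟨tv C hsC F x ν hFF hCFx hνx, fun a b => tv_isom C hsC F x ν hFF hCFx hνx a b,
    fun f => tv_stable C hsC F x ν hFF hCFx hνx f, ?_⟩
  have hUT : C U (tv C hsC F x ν hFF hCFx hνx z)
      = (p₁ + k * (μ * p₁ - 1)) + (k * η - ν) * q₁ := by
    rw [tv_coe, pair_tvAux, hCUx, hCxz, hUF, ← hp₁, ← hq₁]
    ring
  have hFT : C F (tv C hsC F x ν hFF hCFx hνx z) = q₁ := by
    rw [tv_coe, pair_tvAux, hCFx, hFF, ← hq₁]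
    ring
  rw [hUT, hFT]
  exact hk.add_mul_right_left (k * η - ν)

/-- The degenerate move: when both pairings vanish, one transvection makes them
`(-1, 0)`. -/
lemma special (hsC : ∀ a b : M, C a b = C b a) (hevenC : ∀ w : M, Even (C w w))
    (U F : M) (hUU0 : C U U = 0) (hFF : C F F = 0) (hUF : C U F = 1) (hFU : C F U = 1)
    (z wc : M) (hwc : C z wc = 1) (hp : C U z = 0) (hq : C F z = 0) :
    ∃ T : M ≃ₗ[ℤ] M, (∀ a b, C (T a) (T b) = C a b) ∧
      (∀ f : M →ₗ[ℤ] ℤ, ∃ x₀, ∀ w, f (T w) - f w = C x₀ w) ∧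
      IsCoprime (C U (T z)) (C F (T z)) := by
  classical
  set μ : ℤ := C F wc with hμ
  set η : ℤ := C U wc with hη
  obtain ⟨ε, hε⟩ := hevenC wc
  set x : M := wc - μ • U with hx
  have hCFx : C F x = 0 := by
    rw [hx]
    simp only [map_smul, map_sub, smul_eq_mul, hFU]
    rw [← hμ]; ring
  have hCxz : C x z = 1 := by
    rw [hx]
    have h1 : C wc z = 1 := by rw [hsC wc z]; exact hwc
    simp only [map_sub, LinearMap.sub_apply, map_smul, LinearMap.smul_apply, smul_eq_mul]
    rw [h1, hp]; ring
  set ν : ℤ := ε - μ * η with hν'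
  have hνx : C x x = 2 * ν := by
    have hη2 : C wc U = η := by rw [hsC wc U]
    rw [hx]
    simp only [map_sub, LinearMap.sub_apply, map_smul, LinearMap.smul_apply, smul_eq_mul]
    rw [hUU0, hε, hη2, ← hη, hν']
    ring
  refine ⟨tv C hsC F x ν hFF hCFx hνx, fun a b => tv_isom C hsC F x ν hFF hCFx hνx a b,
    fun f => tv_stable C hsC F x ν hFF hCFx hνx f, ?_⟩
  have hUT : C U (tv C hsC F x ν hFF hCFx hνx z) = -1 := by
    rw [tv_coe, pair_tvAux, hCxz, hUF, hq, hp]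
    ring
  have hFT : C F (tv C hsC F x ν hFF hCFx hνx z) = 0 := by
    rw [tv_coe, pair_tvAux, hCFx, hFF, hq]
    ring
  rw [hUT, hFT]
  exact ⟨-1, 0, by ring⟩

/-- Step 1: we may always reach a vector whose pairings with the hyperbolic pair
`E, F` are coprime. -/
lemma step1 (hsC : ∀ a b : M, C a b = C b a) (hevenC : ∀ w : M, Even (C w w))
    (E F : M) (hEE : C E E = 0) (hFF : C F F = 0) (hEF : C E F = 1) (hFE : C F E = 1)
    (z wc : M) (hwc : C z wc = 1) :
    ∃ T : M ≃ₗ[ℤ] M, (∀ a b, C (T a) (T b) = C a b) ∧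
      (∀ f : M →ₗ[ℤ] ℤ, ∃ x₀, ∀ w, f (T w) - f w = C x₀ w) ∧
      IsCoprime (C E (T z)) (C F (T z)) := by
  by_cases hq : C F z = 0
  · by_cases hp : C E z = 0
    · exact special C hsC hevenC E F hEE hFF hEF hFE z wc hwc hp hq
    · obtain ⟨T, h1, h2, h3⟩ := dirty C hsC hevenC F E hFF hEE hFE hEF z wc hwc hp
      exact ⟨T, h1, h2, h3.symm⟩
  · exact dirty C hsC hevenC E F hEE hFF hEF hFE z wc hwc hq

end Transvection

/-- The endgame: given coprime pairings against one hyperbolic pair, there is an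
isotropic vector pairing to `1`. -/
lemma endgame {L : Type*} [AddCommGroup L] [instL : Module ℤ L] (B : BilinForm ℤ L)
    (hsB : ∀ a b : L, B a b = B b a)
    (e₁ f₁ e₂ f₂ : L)
    (h11 : B e₁ e₁ = 0) (h12 : B e₁ f₁ = 1) (h22 : B f₁ f₁ = 0)
    (h33 : B e₂ e₂ = 0) (h34 : B e₂ f₂ = 1) (h44 : B f₂ f₂ = 0)
    (h13 : B e₁ e₂ = 0) (h14 : B e₁ f₂ = 0) (h23 : B f₁ e₂ = 0) (h24 : B f₁ f₂ = 0)
    (v : L) (hco : IsCoprime (B e₁ v) (B f₁ v)) :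
    ∃ u : L, B u u = 0 ∧ B u v = 1 := by
  have hinst : instL = AddCommGroup.toIntModule L :=
    ((AddCommGroup.uniqueIntModule (M := L)).uniq instL)
  subst hinst
  obtain ⟨x, y, σ, τ, heq⟩ := lemE (B e₁ v) (B f₁ v) (B e₂ v) (B f₂ v) hco
  have h21 : B f₁ e₁ = 1 := (hsB f₁ e₁).trans h12
  have h31 : B e₂ e₁ = 0 := (hsB e₂ e₁).trans h13
  have h41 : B f₂ e₁ = 0 := (hsB f₂ e₁).trans h14
  have h32 : B e₂ f₁ = 0 := (hsB e₂ f₁).trans h23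
  have h42 : B f₂ f₁ = 0 := (hsB f₂ f₁).trans h24
  have h43 : B f₂ e₂ = 1 := (hsB f₂ e₂).trans h34
  refine ⟨(x*σ) • e₁ + (y*τ) • f₁ + (x*τ) • e₂ + (-(y*σ)) • f₂, ?_, ?_⟩
  · simp only [map_add, map_smul, LinearMap.add_apply, LinearMap.smul_apply, smul_eq_mul,
      h11, h12, h22, h33, h34, h44, h13, h14, h23, h24, h21, h31, h41, h32, h42, h43]
    ring
  · simp only [map_add, map_smul, LinearMap.add_apply, LinearMap.smul_apply, smul_eq_mul]
    linear_combination heq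

lemma int_one_le_sq {c : ℤ} (hc : c ≠ 0) : 1 ≤ c * c := by
  rcases lt_or_gt_of_ne hc with h | h <;> nlinarith

set_option maxHeartbeats 1000000 in
/-- case `k = 2`, `δ(z) = 0`: in `Λ = L ⊕ ℤe`, `L` even unimodular
containing `U ⊕ U`, `q(e) = -2`, a primitive `z` with `δ(z) = 0` (i.e.
`z/d(z) ∈ Λ`) and `q(z) < 0` is `Õ(Λ)`-conjugate to a vector of `L` (second
coordinate zero), and the resulting rank-2 sublattice `⟨γ(z), e⟩` is negative
definite. -/
theorem k2_delta_zero_case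
    (L : Type*) [AddCommGroup L] [Module ℤ L] [Module.Free ℤ L] [Module.Finite ℤ L]
    (B : BilinForm ℤ L) (hsymm : IsSymmForm B) (heven : IsEvenForm B)
    (huni : IsUnimodularForm B) (hUU : ContainsUU B)
    (z : L × ℤ) (hz : IsPrimitiveVec z)
    (d : ℤ) (hd : IsDivisibility (prodForm B 2) z d)
    (hδ : ∃ w : L × ℤ, z = d • w)
    (hq : prodForm B 2 z z < 0) :
    ∃ γ : (L × ℤ) ≃ₗ[ℤ] (L × ℤ), IsStableIsometry (prodForm B 2) γ ∧
      (γ z).2 = 0 ∧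
      NegDefPair (prodForm B 2) (γ z) ((0 : L), (1 : ℤ)) := by
  classical
  obtain ⟨u₁, u₂, u₃, u₄, g11, g22, g12, g33, g44, g34, g13, g14, g23, g24⟩ := hUU
  set C : BilinForm ℤ (L × ℤ) := prodForm B 2 with hC
  have Capp : ∀ v w : L × ℤ, C v w = B v.1 w.1 - 2 * v.2 * w.2 := fun _ _ => rfl
  have hsC : ∀ a b : L × ℤ, C a b = C b a := by
    intro a b; rw [Capp, Capp, hsymm a.1 b.1]; ring
  have hevenC : ∀ w : L × ℤ, Even (C w w) := by
    intro w
    obtain ⟨r, hr⟩ := heven w.1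
    exact ⟨r - w.2 * w.2, by rw [Capp, hr]; ring⟩
  -- the divisibility is 1 and there is a certificate pairing to 1
  have hd1 : d = 1 := by
    obtain ⟨w₀, hw₀⟩ := hδ
    rcases hz d w₀ hw₀ with h | h
    · exact h
    · exfalso; have := hd.1; omega
  obtain ⟨wc, hwc⟩ : ∃ wc : L × ℤ, C z wc = 1 := by
    have hprin : (LinearMap.range (C z)).IsPrincipal := inferInstance
    set g : ℤ := Submodule.IsPrincipal.generator (LinearMap.range (C z)) with hg
    have hgmem : g ∈ LinearMap.range (C z) :=
      Submodule.IsPrincipal.generator_mem (LinearMap.range (C z))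
    have hgdvd : ∀ w : L × ℤ, g ∣ C z w := by
      intro w
      have hmem : C z w ∈ LinearMap.range (C z) := ⟨w, rfl⟩
      rw [← Submodule.IsPrincipal.span_singleton_generator (LinearMap.range (C z))] at hmem
      obtain ⟨c, hc⟩ := Submodule.mem_span_singleton.mp hmem
      exact ⟨c, by rw [← hc, hg, smul_eq_mul, mul_comm]⟩
    have hgd : g ∣ d := hd.2.2 g hgdvd
    rw [hd1] at hgd
    obtain ⟨w', hw'⟩ := hgmem
    rcases Int.isUnit_iff.mp (isUnit_of_dvd_one hgd) with h | h
    · exact ⟨w', by rw [hw', h]⟩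
    · exact ⟨-w', by rw [map_neg, hw', h]; ring⟩
  -- basis vectors of the two hyperbolic planes inside L × ℤ
  set E : L × ℤ := (u₁, 0) with hE
  set F : L × ℤ := (u₂, 0) with hF
  have hEE : C E E = 0 := by rw [Capp]; show B u₁ u₁ - 2*0*0 = 0; rw [g11]; ring
  have hFF : C F F = 0 := by rw [Capp]; show B u₂ u₂ - 2*0*0 = 0; rw [g22]; ring
  have hEF : C E F = 1 := by rw [Capp]; show B u₁ u₂ - 2*0*0 = 1; rw [g12]; ring
  have hFE : C F E = 1 := by
    rw [Capp]; show B u₂ u₁ - 2*0*0 = 1; rw [hsymm u₂ u₁, g12]; ring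
  -- Step 1: make the pairings with E, F coprime
  obtain ⟨T₁, hiso₁, hstab₁, hco₁⟩ := step1 C hsC hevenC E F hEE hFF hEF hFE z wc hwc
  set z' : L × ℤ := T₁ z with hz'
  -- Endgame: an isotropic vector of L pairing to 1 with z'.1
  have hfst : ∀ (a : L) (w : L × ℤ), C ((a, 0) : L × ℤ) w = B a w.1 := by
    intro a w; rw [Capp]; show B a w.1 - 2*0*w.2 = B a w.1; ring
  have hco₁' : IsCoprime (B u₁ z'.1) (B u₂ z'.1) := by
    rwa [← hfst u₁ z', ← hfst u₂ z']
  obtain ⟨u, huu, huv⟩ := endgame B (fun a b => hsymm a b) u₁ u₂ u₃ u₄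
    g11 g12 g22 g33 g34 g44 g13 g14 g23 g24 z'.1 hco₁'
  -- Kill shot: transvection sending z' into L × {0}
  set Up : L × ℤ := (u, 0) with hUp
  set x' : L × ℤ := ((0 : L), -z'.2) with hx'
  have hUpUp : C Up Up = 0 := by rw [Capp]; show B u u - 2*0*0 = 0; rw [huu]; ring
  have hUpx' : C Up x' = 0 := by
    rw [Capp]; show B u 0 - 2*0*(-z'.2) = 0; rw [map_zero (B u)]; ring
  have hνx' : C x' x' = 2 * (-(z'.2 * z'.2)) := by
    rw [Capp]; show B 0 0 - 2*(-z'.2)*(-z'.2) = 2 * (-(z'.2 * z'.2))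
    rw [map_zero B, LinearMap.zero_apply]; ring
  have hUpz' : C Up z' = 1 := by rw [hfst u z']; exact huv
  set T₂ : (L × ℤ) ≃ₗ[ℤ] (L × ℤ) := tv C hsC Up x' (-(z'.2 * z'.2)) hUpUp hUpx' hνx'
    with hT₂
  set e : L × ℤ := ((0 : L), (1 : ℤ)) with he
  have hsnd : ∀ w : L × ℤ, C w e = -2 * w.2 := by
    intro w; rw [Capp]; show B w.1 0 - 2*w.2*1 = -2*w.2; rw [map_zero (B w.1)]; ring
  have hCx'z' : C x' z' = 2 * z'.2 * z'.2 := by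
    rw [Capp]; show B 0 z'.1 - 2*(-z'.2)*z'.2 = 2 * z'.2 * z'.2
    rw [map_zero B, LinearMap.zero_apply]; ring
  have hT₂z'e : C (T₂ z') e = 0 := by
    rw [hT₂, tv_coe, tvAux_pair, hUpz', hCx'z']
    have h1 : C x' e = 2 * z'.2 := by
      rw [Capp]; show B 0 0 - 2*(-z'.2)*1 = 2*z'.2
      rw [map_zero B, LinearMap.zero_apply]; ring
    have h2 : C Up e = 0 := by
      rw [Capp]; show B u 0 - 2*0*1 = 0; rw [map_zero (B u)]; ring
    have h3 : C z' e = -2 * z'.2 := hsnd z'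
    rw [h1, h2, h3]; ring
  have hT₂z'snd : (T₂ z').2 = 0 := by
    have := hsnd (T₂ z')
    rw [hT₂z'e] at this
    linarith
  -- assemble γ
  refine ⟨T₁.trans T₂, ?_, ?_, ?_⟩
  · obtain ⟨hA, hB⟩ := comp_isom_stable C T₁ T₂ hiso₁
      (fun a b => tv_isom C hsC Up x' (-(z'.2 * z'.2)) hUpUp hUpx' hνx' a b)
      hstab₁ (fun f => tv_stable C hsC Up x' (-(z'.2 * z'.2)) hUpUp hUpx' hνx' f)
    exact ⟨hA, hB⟩
  · rw [LinearEquiv.trans_apply]; exact hT₂z'snd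
  · -- negative definiteness
    have hisoγ : C ((T₁.trans T₂) z) ((T₁.trans T₂) z) = C z z := by
      rw [LinearEquiv.trans_apply]
      rw [tv_isom C hsC Up x' (-(z'.2 * z'.2)) hUpUp hUpx' hνx' (T₁ z) (T₁ z)]
      exact hiso₁ z z
    set gz : L × ℤ := (T₁.trans T₂) z with hgz
    have hgz2 : gz.2 = 0 := by rw [hgz, LinearEquiv.trans_apply]; exact hT₂z'snd
    have hCgz : C gz gz < 0 := by rw [hisoγ]; exact hq
    have hBneg : B gz.1 gz.1 < 0 := by
      have := Capp gz gz
      rw [hgz2] at this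
      simp only [mul_zero, zero_mul, sub_zero] at this
      rwa [this] at hCgz
    have hgz1ne : gz.1 ≠ 0 := by
      intro hcon
      rw [hcon, map_zero B, LinearMap.zero_apply] at hBneg
      omega
    have hCgze : C gz e = 0 := by rw [hsnd, hgz2]; ring
    have hCee : C e e = -2 := by
      rw [Capp]; show B 0 0 - 2*1*1 = -2; rw [map_zero B, LinearMap.zero_apply]; ring
    constructor
    · rw [LinearIndependent.pair_iff]
      intro s t hst
      have hs : s * C gz gz = 0 := by
        have h0 : C (s • gz + t • e) gz = 0 := by rw [hst, map_zero, LinearMap.zero_apply]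
        have hCegz : C e gz = 0 := by rw [hsC e gz, hCgze]
        simp only [map_add, map_smul, LinearMap.add_apply, LinearMap.smul_apply,
          smul_eq_mul, hCegz] at h0
        linarith
      have hs0 : s = 0 := by
        rcases mul_eq_zero.mp hs with h | h
        · exact h
        · omega
      have ht : t * C e e = 0 := by
        have h0 : C (s • gz + t • e) e = 0 := by rw [hst, map_zero, LinearMap.zero_apply]
        simp only [map_add, map_smul, LinearMap.add_apply, LinearMap.smul_apply,
          smul_eq_mul, hCgze] at h0
        linarith
      have ht0 : t = 0 := by
        rw [hCee] at ht
        omega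
      exact ⟨hs0, ht0⟩
    · intro w hw hwne
      obtain ⟨c₁, c₂, hcc⟩ := Submodule.mem_span_pair.mp hw
      have hCw : C w w = c₁ * c₁ * C gz gz + c₂ * c₂ * (-2) := by
        rw [← hcc]
        simp only [map_add, map_smul, LinearMap.add_apply, LinearMap.smul_apply,
          smul_eq_mul, hCgze, hCee]
        have hCegz : C e gz = 0 := by rw [hsC e gz, hCgze]
        rw [hCegz]
        ring
      rw [hCw]
      by_cases hc₁ : c₁ = 0
      · have hc₂ : c₂ ≠ 0 := by
          intro hcon
          apply hwne
          rw [← hcc, hc₁, hcon, zero_smul, zero_smul, add_zero]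
        have h1 : 1 ≤ c₂ * c₂ := int_one_le_sq hc₂
        rw [hc₁]
        nlinarith
      · have h1 : 1 ≤ c₁ * c₁ := int_one_le_sq hc₁
        have h2 : c₁ * c₁ * C gz gz ≤ 1 * C gz gz :=
          mul_le_mul_of_nonpos_right h1 (le_of_lt hCgz)
        have h3 : c₂ * c₂ * (-2) ≤ 0 := by nlinarith [mul_self_nonneg c₂]
        linarith
end

section
/- Let t be a positive even integer, let L be an even unimodular lattice containing U ⊕ U as an orthogonal direct summand, and let Λ = L ⊕ ℤe be the orthogonal direct sum with q(e) = −t. For every primitive vector x ∈ L and every integer b there exists a primitive vector x' ∈ L such that the vectors t·x + b·e and t·x' + (b − t)·e have the same square and the same divisibility in Λ, and they lie in the same Õ(Λ)-orbit. Consequently, every vector of Λ of the form t·x + b·e with x ∈ L primitive is Õ(Λ)-conjugate to a vector of the form t·x' + b'·e with x' ∈ L primitive and |b'| ≤ t/2. -/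
open LinearMap (BilinForm)

/-!
Every vector `x` of `L` is orthogonal to a hyperbolic plane: run Euclid's algorithm on the
pairings of `x` with a basis `e₁, f₁, e₂, f₂` of `U ⊕ U`, changing the basis by isometries of
`U ⊕ U`, until `x` is orthogonal to `e₂, f₂`. If `x` is primitive, unimodularity gives `v` with
`q(x, v) = 1`, and adding a suitable vector of that hyperbolic plane makes `v` isotropic.

For such an isotropic `u` and any `ε ∈ ℤ`, the Eichler transvection `E((εu, 0), e)` of `Λ` is
defined over `ℤ` because `q(e) = -t` is even, and it acts trivially on `Λ*/Λ`. It sends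
`t•x + b•e` to `t•x' + (b - εt)•e` with `x' = x + (εt/2 - b)εu`, which is primitive since
`q(x', u) = 1`. Taking `ε = 1`, resp. `ε` the nearest integer to `b/t`, gives both claims.
-/

section Primitive

variable {M : Type*} [AddCommGroup M] [Module ℤ M]

theorem IsPrimitiveVec.of_map_eq_one {x : M} (f : M →ₗ[ℤ] ℤ) (hf : f x = 1) :
    IsPrimitiveVec x := by
  rintro m w rfl
  rw [map_zsmul, smul_eq_mul] at hf
  exact Int.eq_one_or_neg_one_of_mul_eq_one hf

theorem IsPrimitiveVec.exists_map_eq_one [Module.Free ℤ M] {x : M} (hx : IsPrimitiveVec x) :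
    ∃ f : M →ₗ[ℤ] ℤ, f x = 1 := by
  let b := Module.Free.chooseBasis ℤ M
  let I := LinearMap.range (Module.Dual.eval ℤ M x)
  let d := Submodule.IsPrincipal.generator I
  obtain ⟨g, hg⟩ : d ∈ I := Submodule.IsPrincipal.generator_mem I
  have hdvd (i) : d ∣ b.repr x i := by
    obtain ⟨s, hs⟩ := (Submodule.IsPrincipal.mem_iff_eq_smul_generator I).1 ⟨b.coord i, rfl⟩
    exact ⟨s, by simpa [mul_comm] using hs⟩
  have hxd : x = d • b.repr.symm ((b.repr x).mapRange (· / d) (Int.zero_ediv d)) := by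
    apply b.repr.injective
    ext i
    simp [Int.mul_ediv_cancel' (hdvd i)]
  rcases hx d _ hxd with hd | hd
  · exact ⟨g, by simpa [hd] using hg⟩
  · exact ⟨-g, by simpa [hd] using congrArg Neg.neg hg⟩

end Primitive

section Frame

variable {M : Type*} [AddCommGroup M] [Module ℤ M] {B : BilinForm ℤ M}

def IsUUFrame (B : BilinForm ℤ M) (e₁ f₁ e₂ f₂ : M) : Prop :=
  B e₁ e₁ = 0 ∧ B f₁ f₁ = 0 ∧ B e₁ f₁ = 1 ∧
  B e₂ e₂ = 0 ∧ B f₂ f₂ = 0 ∧ B e₂ f₂ = 1 ∧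
  B e₁ e₂ = 0 ∧ B e₁ f₂ = 0 ∧ B f₁ e₂ = 0 ∧ B f₁ f₂ = 0

theorem IsUUFrame.swap_second (hsymm : IsSymmForm B) {e₁ f₁ e₂ f₂ : M}
    (hF : IsUUFrame B e₁ f₁ e₂ f₂) : IsUUFrame B e₁ f₁ f₂ e₂ := by
  obtain ⟨h₁, h₂, h₃, h₄, h₅, h₆, h₇, h₈, h₉, h₁₀⟩ := hF
  exact ⟨h₁, h₂, h₃, h₅, h₄, hsymm e₂ f₂ ▸ h₆, h₈, h₇, h₁₀, h₉⟩

theorem IsUUFrame.swap_pairs (hsymm : IsSymmForm B) {e₁ f₁ e₂ f₂ : M}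
    (hF : IsUUFrame B e₁ f₁ e₂ f₂) : IsUUFrame B e₂ f₂ e₁ f₁ := by
  obtain ⟨h₁, h₂, h₃, h₄, h₅, h₆, h₇, h₈, h₉, h₁₀⟩ := hF
  exact ⟨h₄, h₅, h₆, h₁, h₂, h₃, hsymm e₁ e₂ ▸ h₇, hsymm f₁ e₂ ▸ h₉, hsymm e₁ f₂ ▸ h₈,
    hsymm f₁ f₂ ▸ h₁₀⟩

theorem IsUUFrame.shear (hsymm : IsSymmForm B) {e₁ f₁ e₂ f₂ : M}
    (hF : IsUUFrame B e₁ f₁ e₂ f₂) (n : ℤ) :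
    IsUUFrame B (e₂ + n • e₁) f₂ e₁ (f₁ - n • f₂) := by
  obtain ⟨h₁, h₂, h₃, h₄, h₅, h₆, h₇, h₈, h₉, h₁₀⟩ := hF
  have h₇' := hsymm e₂ e₁
  have h₉' := hsymm e₂ f₁
  have h₁₀' := hsymm f₂ f₁
  have h₈' := hsymm f₂ e₁
  simp only [IsUUFrame, map_add, map_sub, map_zsmul, LinearMap.add_apply, LinearMap.sub_apply,
    LinearMap.smul_apply, smul_eq_mul] at *
  refine ⟨?_, ?_, ?_, ?_, ?_, ?_, ?_, ?_, ?_, ?_⟩ <;> grind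

theorem IsUUFrame.exists_orthogonal_of_dvd (hsymm : IsSymmForm B) {e₁ f₁ e₂ f₂ : M}
    (hF : IsUUFrame B e₁ f₁ e₂ f₂) {x : M} (h₃ : B x e₁ ∣ B x e₂) (h₄ : B x e₁ ∣ B x f₂) :
    ∃ e f : M, B e e = 0 ∧ B f f = 0 ∧ B e f = 1 ∧ B x e = 0 ∧ B x f = 0 := by
  obtain ⟨he₁, -, -, he₂, hf₂, he₂f₂, he₁e₂, he₁f₂, -, -⟩ := hF
  have he₂e₁ : B e₂ e₁ = 0 := hsymm e₁ e₂ ▸ he₁e₂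
  have hf₂e₁ : B f₂ e₁ = 0 := hsymm e₁ f₂ ▸ he₁f₂
  refine ⟨e₂ - (B x e₂ / B x e₁) • e₁, f₂ - (B x f₂ / B x e₁) • e₁, ?_, ?_, ?_, ?_, ?_⟩ <;>
    simp only [map_sub, map_zsmul, LinearMap.sub_apply, LinearMap.smul_apply, smul_eq_mul,
      he₁, he₂, hf₂, he₂f₂, he₁e₂, he₁f₂, he₂e₁, hf₂e₁, Int.ediv_mul_cancel h₃,
      Int.ediv_mul_cancel h₄, mul_zero, sub_zero, sub_self]

theorem IsUUFrame.exists_orthogonal_of_ne_zero (hsymm : IsSymmForm B) (x : M)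
    {e₁ f₁ e₂ f₂ : M} (hF : IsUUFrame B e₁ f₁ e₂ f₂) (hx : B x e₁ ≠ 0) :
    ∃ e f : M, B e e = 0 ∧ B f f = 0 ∧ B e f = 1 ∧ B x e = 0 ∧ B x f = 0 := by
  induction hn : (B x e₁).natAbs using Nat.strong_induction_on generalizing e₁ f₁ e₂ f₂ with
  | _ n ih =>
    -- Euclid's algorithm: replace `B x e₁` by the remainder of `B x e₂` modulo it.
    have euclid_step {e₂' f₂' : M} (hF' : IsUUFrame B e₁ f₁ e₂' f₂') (hndvd : ¬B x e₁ ∣ B x e₂') :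
        ∃ e f : M, B e e = 0 ∧ B f f = 0 ∧ B e f = 1 ∧ B x e = 0 ∧ B x f = 0 := by
      have hrem : B x (e₂' + (-(B x e₂' / B x e₁)) • e₁) = B x e₂' % B x e₁ := by
        rw [map_add, map_zsmul, smul_eq_mul, Int.emod_def]
        ring
      have hne : B x e₂' % B x e₁ ≠ 0 := mt Int.dvd_of_emod_eq_zero hndvd
      have hlt : (B x e₂' % B x e₁).natAbs < n := by
        have := Int.emod_nonneg (B x e₂') hx
        have := Int.emod_lt (B x e₂') hx
        omega
      exact ih _ (hrem ▸ hlt) (hF'.shear hsymm _) (hrem ▸ hne) rfl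
    by_cases h₃ : B x e₁ ∣ B x e₂
    · by_cases h₄ : B x e₁ ∣ B x f₂
      · exact hF.exists_orthogonal_of_dvd hsymm h₃ h₄
      · exact euclid_step (hF.swap_second hsymm) h₄
    · exact euclid_step hF h₃

theorem IsUUFrame.exists_orthogonal (hsymm : IsSymmForm B) (x : M)
    {e₁ f₁ e₂ f₂ : M} (hF : IsUUFrame B e₁ f₁ e₂ f₂) :
    ∃ e f : M, B e e = 0 ∧ B f f = 0 ∧ B e f = 1 ∧ B x e = 0 ∧ B x f = 0 := by
  rcases ne_or_eq (B x e₁) 0 with h₁ | h₁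
  · exact hF.exists_orthogonal_of_ne_zero hsymm x h₁
  rcases ne_or_eq (B x e₂) 0 with h₃ | h₃
  · exact (hF.swap_pairs hsymm).exists_orthogonal_of_ne_zero hsymm x h₃
  rcases ne_or_eq (B x f₂) 0 with h₄ | h₄
  · exact ((hF.swap_second hsymm).swap_pairs hsymm).exists_orthogonal_of_ne_zero hsymm x h₄
  exact hF.exists_orthogonal_of_dvd hsymm (by simp [h₁, h₃]) (by simp [h₁, h₄])

end Frame

section Isotropic

variable {M : Type*} [AddCommGroup M] [Module ℤ M] {B : BilinForm ℤ M}

theorem exists_isotropic_apply_eq (hsymm : IsSymmForm B) (heven : IsEvenForm B) {x e f : M}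
    (he : B e e = 0) (hf : B f f = 0) (hef : B e f = 1) (hxe : B x e = 0) (hxf : B x f = 0)
    (v : M) : ∃ u : M, B u u = 0 ∧ B x u = B x v := by
  obtain ⟨m, hm⟩ := heven v
  refine ⟨v + (1 - B v f) • e + (B v e * B v f - B v e - m) • f, ?_, ?_⟩
  · have hfe : B f e = 1 := hsymm e f ▸ hef
    simp only [map_add, map_zsmul, LinearMap.add_apply, LinearMap.smul_apply, smul_eq_mul,
      he, hf, hef, hfe, hm, ← hsymm v]
    ring
  · simp only [map_add, map_zsmul, smul_eq_mul, hxe, hxf]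
    ring

theorem exists_isotropic_apply_eq_one [Module.Free ℤ M] (hsymm : IsSymmForm B)
    (heven : IsEvenForm B) (huni : IsUnimodularForm B) (hUU : ContainsUU B) {x : M}
    (hx : IsPrimitiveVec x) : ∃ u : M, B u u = 0 ∧ B x u = 1 := by
  obtain ⟨g, hg⟩ := hx.exists_map_eq_one
  obtain ⟨v, hv⟩ := huni.2 g
  have hxv : B x v = 1 := by rw [hsymm, ← hg, ← hv]
  obtain ⟨e₁, f₁, e₂, f₂, hF⟩ := hUU
  obtain ⟨e, f, he, hf, hef, hxe, hxf⟩ := IsUUFrame.exists_orthogonal hsymm x hF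
  exact hxv ▸ exists_isotropic_apply_eq hsymm heven he hf hef hxe hxf v

end Isotropic

section Eichler

variable {M : Type*} [AddCommGroup M] [Module ℤ M]

/-- The Eichler transvection `E(e, a)`; here `h` stands for `q(a)/2`. -/
def eichlerTransvection (B : BilinForm ℤ M) (e a : M) (h : ℤ) : M →ₗ[ℤ] M :=
  let f : M →+ M := AddMonoidHom.mk' (fun v => v - B e v • a + (B a v - h * B e v) • e)
    fun v w => by simp only [map_add, mul_add, add_sub_add_comm, add_zsmul]; abel
  { f with map_smul' := map_intCast_smul f ℤ ℤ }

variable {B : BilinForm ℤ M} {e a : M} {h : ℤ}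

theorem eichlerTransvection_apply (v : M) :
    eichlerTransvection B e a h v = v - B e v • a + (B a v - h * B e v) • e := rfl

theorem eichlerTransvection_isometry (hsymm : IsSymmForm B) (he : B e e = 0) (hea : B e a = 0)
    (ha : B a a = 2 * h) (v w : M) :
    B (eichlerTransvection B e a h v) (eichlerTransvection B e a h w) = B v w := by
  have hae : B a e = 0 := hsymm e a ▸ hea
  simp only [eichlerTransvection_apply, map_add, map_sub, map_zsmul, LinearMap.add_apply,
    LinearMap.sub_apply, LinearMap.smul_apply, smul_eq_mul, he, hea, hae, ha, hsymm v e,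
    hsymm v a]
  ring

theorem eichlerTransvection_neg_apply (hsymm : IsSymmForm B) (he : B e e = 0) (hea : B e a = 0)
    (ha : B a a = 2 * h) (v : M) :
    eichlerTransvection B e a h (eichlerTransvection B e (-a) h v) = v := by
  have hae : B a e = 0 := hsymm e a ▸ hea
  set w := eichlerTransvection B e (-a) h v with hw
  have hew : B e w = B e v := by
    simp only [hw, eichlerTransvection_apply, map_add, map_sub, map_zsmul, map_neg, smul_eq_mul,
      he, hea]
    ring
  have haw : B a w = -(B (-a) v - h * B e v) + h * B e v := by
    simp only [hw, eichlerTransvection_apply, map_add, map_sub, map_zsmul, map_neg,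
      LinearMap.neg_apply, smul_eq_mul, hae, ha]
    ring
  rw [eichlerTransvection_apply, hew, haw, add_sub_cancel_right, neg_zsmul, hw,
    eichlerTransvection_apply, zsmul_neg]
  abel

def eichlerEquiv (hsymm : IsSymmForm B) (he : B e e = 0) (hea : B e a = 0)
    (ha : B a a = 2 * h) : M ≃ₗ[ℤ] M :=
  LinearEquiv.ofLinearMap (eichlerTransvection B e a h) (eichlerTransvection B e (-a) h)
    (LinearMap.ext (eichlerTransvection_neg_apply hsymm he hea ha))
    (LinearMap.ext fun v => by
      simpa using eichlerTransvection_neg_apply (a := -a) hsymm he (by simp [hea]) (by simp [ha]) v)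

theorem eichlerEquiv_apply (hsymm : IsSymmForm B) (he : B e e = 0) (hea : B e a = 0)
    (ha : B a a = 2 * h) (v : M) :
    eichlerEquiv hsymm he hea ha v = eichlerTransvection B e a h v := rfl

theorem isStableIsometry_eichlerEquiv (hsymm : IsSymmForm B) (he : B e e = 0) (hea : B e a = 0)
    (ha : B a a = 2 * h) : IsStableIsometry B (eichlerEquiv hsymm he hea ha) := by
  refine ⟨eichlerTransvection_isometry hsymm he hea ha, fun f => ⟨f e • a - f a • e - (h * f e) • e,
    fun w => ?_⟩⟩
  simp only [eichlerEquiv_apply, eichlerTransvection_apply, map_add, map_sub, map_zsmul,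
    LinearMap.sub_apply, LinearMap.smul_apply, smul_eq_mul]
  ring

end Eichler

section Divisibility

variable {M : Type*} [AddCommGroup M] [Module ℤ M] {B : BilinForm ℤ M}

theorem isDivisibility_map_iff {γ : M ≃ₗ[ℤ] M} (hγ : ∀ v w, B (γ v) (γ w) = B v w) (z : M)
    (d : ℤ) : IsDivisibility B (γ z) d ↔ IsDivisibility B z d := by
  have hdvd (d' : ℤ) : (∀ w, d' ∣ B (γ z) w) ↔ ∀ w, d' ∣ B z w :=
    ⟨fun H w => hγ z w ▸ H (γ w), fun H w => by
      rw [← γ.apply_symm_apply w, hγ]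
      exact H _⟩
  simp only [IsDivisibility, hdvd]

end Divisibility

section ShiftModT

variable {L : Type*} [AddCommGroup L] [Module ℤ L] {B : BilinForm ℤ L}

theorem prodForm_apply (t : ℤ) (v w : L × ℤ) :
    prodForm B t v w = B v.1 w.1 - t * v.2 * w.2 := rfl

theorem IsSymmForm.prodForm (hsymm : IsSymmForm B) (t : ℤ) : IsSymmForm (prodForm B t) :=
  fun v w => by rw [prodForm_apply, prodForm_apply, hsymm]; ring

theorem exists_stable_shift_of_isotropic (hsymm : IsSymmForm B) {t h : ℤ} (ht : t = h + h)
    {u : L} (hu : B u u = 0) (x : L) (b : ℤ) :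
    ∃ γ : (L × ℤ) ≃ₗ[ℤ] (L × ℤ), IsStableIsometry (prodForm B t) γ ∧
      γ (t • x, b) = (t • (x + (h * B u x - b) • u), b - t * B u x) := by
  have he : prodForm B t (u, 0) (u, 0) = 0 := by simp [prodForm_apply, hu]
  have hea : prodForm B t (u, 0) (0, 1) = 0 := by simp [prodForm_apply]
  have ha : prodForm B t (0, 1) (0, 1) = 2 * -h := by simp [prodForm_apply, ht]; ring
  refine ⟨eichlerEquiv (hsymm.prodForm t) he hea ha, isStableIsometry_eichlerEquiv _ _ _ _, ?_⟩
  simp only [eichlerEquiv_apply, eichlerTransvection_apply, prodForm_apply, map_zsmul, map_zero,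
    LinearMap.zero_apply, smul_eq_mul, Prod.ext_iff, Prod.fst_add, Prod.fst_sub, Prod.smul_fst,
    Prod.snd_add, Prod.snd_sub, Prod.smul_snd, zsmul_zero, zsmul_add, smul_smul]
  constructor
  · rw [sub_zero]
    congr 2
    ring
  · ring

theorem exists_stable_shift [Module.Free ℤ L] (hsymm : IsSymmForm B) (heven : IsEvenForm B)
    (huni : IsUnimodularForm B) (hUU : ContainsUU B) {t : ℤ} (ht : Even t) {x : L}
    (hx : IsPrimitiveVec x) (b ε : ℤ) :
    ∃ x' : L, IsPrimitiveVec x' ∧ ∃ γ : (L × ℤ) ≃ₗ[ℤ] (L × ℤ),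
      IsStableIsometry (prodForm B t) γ ∧ γ (t • x, b) = (t • x', b - t * ε) := by
  obtain ⟨h, ht⟩ := ht
  obtain ⟨u, hu, hxu⟩ := exists_isotropic_apply_eq_one hsymm heven huni hUU hx
  have hεu : B (ε • u) (ε • u) = 0 := by simp [hu]
  have hεux : B (ε • u) x = ε := by simp [hsymm u, hxu]
  obtain ⟨γ, hγ, hγx⟩ := exists_stable_shift_of_isotropic hsymm ht hεu x b
  refine ⟨_, IsPrimitiveVec.of_map_eq_one (B.flip u) ?_, γ, hγ, hεux ▸ hγx⟩
  simp [hu, hxu]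

end ShiftModT

theorem Int.exists_two_mul_abs_sub_mul_le {t : ℤ} (ht : 0 < t) (b : ℤ) :
    ∃ k : ℤ, 2 * |b - t * k| ≤ t := by
  have hdiv := Int.emod_add_mul_ediv b t
  have hnonneg := Int.emod_nonneg b ht.ne'
  have hlt := Int.emod_lt_of_pos b ht
  by_cases hr : 2 * (b % t) ≤ t
  · refine ⟨b / t, ?_⟩
    rwa [show b - t * (b / t) = b % t by linarith, abs_of_nonneg hnonneg]
  · refine ⟨b / t + 1, ?_⟩
    rw [show b - t * (b / t + 1) = b % t - t by linarith, abs_of_neg (by linarith)]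
    linarith

theorem shift_b_modulo_t_general
    (t : ℤ) (ht : 0 < t) (hteven : Even t)
    (L : Type*) [AddCommGroup L] [Module ℤ L] [Module.Free ℤ L]
    (B : BilinForm ℤ L) (hsymm : IsSymmForm B) (heven : IsEvenForm B)
    (huni : IsUnimodularForm B) (hUU : ContainsUU B) :
    (∀ x : L, IsPrimitiveVec x → ∀ b : ℤ,
      ∃ x' : L, IsPrimitiveVec x' ∧
        prodForm B t ((t • x, b) : L × ℤ) ((t • x, b) : L × ℤ) =
          prodForm B t ((t • x', b - t) : L × ℤ) ((t • x', b - t) : L × ℤ) ∧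
        (∀ d : ℤ, IsDivisibility (prodForm B t) ((t • x, b) : L × ℤ) d ↔
          IsDivisibility (prodForm B t) ((t • x', b - t) : L × ℤ) d) ∧
        ∃ γ : (L × ℤ) ≃ₗ[ℤ] (L × ℤ), IsStableIsometry (prodForm B t) γ ∧
          γ ((t • x, b) : L × ℤ) = ((t • x', b - t) : L × ℤ)) ∧
    (∀ x : L, IsPrimitiveVec x → ∀ b : ℤ,
      ∃ (x' : L) (b' : ℤ), IsPrimitiveVec x' ∧ 2 * |b'| ≤ t ∧
        ∃ γ : (L × ℤ) ≃ₗ[ℤ] (L × ℤ), IsStableIsometry (prodForm B t) γ ∧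
          γ ((t • x, b) : L × ℤ) = ((t • x', b') : L × ℤ)) := by
  refine ⟨fun x hx b => ?_, fun x hx b => ?_⟩
  · obtain ⟨x', hx', γ, hγ, hγx⟩ :=
      exists_stable_shift hsymm heven huni hUU hteven hx b 1
    rw [mul_one] at hγx
    refine ⟨x', hx', ?_, fun d => ?_, γ, hγ, hγx⟩
    · rw [← hγx, hγ.1]
    · rw [← hγx, isDivisibility_map_iff hγ.1]
  · obtain ⟨k, hk⟩ := Int.exists_two_mul_abs_sub_mul_le ht b
    obtain ⟨x', hx', γ, hγ, hγx⟩ :=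
      exists_stable_shift hsymm heven huni hUU hteven hx b k
    exact ⟨x', b - t * k, hx', hk, γ, hγ, hγx⟩

/-- in `Λ = L ⊕ ℤe`, `L` even unimodular containing `U ⊕ U`,
`q(e) = -t` with `t > 0` even: for `x ∈ L` primitive and `b ∈ ℤ` there is a
primitive `x' ∈ L` such that `t•x + b•e` and `t•x' + (b - t)•e` have the same
square, the same divisibility, and lie in the same `Õ(Λ)`-orbit.  Consequently
every `t•x + b•e` (`x` primitive) is `Õ(Λ)`-conjugate to some `t•x' + b'•e` with
`x'` primitive and `|b'| ≤ t/2` (i.e. `2|b'| ≤ t`). -/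
theorem shift_b_modulo_t
    (t : ℤ) (ht : 0 < t) (hteven : Even t)
    (L : Type*) [AddCommGroup L] [Module ℤ L] [Module.Free ℤ L] [Module.Finite ℤ L]
    (B : BilinForm ℤ L) (hsymm : IsSymmForm B) (heven : IsEvenForm B)
    (huni : IsUnimodularForm B) (hUU : ContainsUU B) :
    (∀ x : L, IsPrimitiveVec x → ∀ b : ℤ,
      ∃ x' : L, IsPrimitiveVec x' ∧
        prodForm B t ((t • x, b) : L × ℤ) ((t • x, b) : L × ℤ) =
          prodForm B t ((t • x', b - t) : L × ℤ) ((t • x', b - t) : L × ℤ) ∧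
        (∀ d : ℤ, IsDivisibility (prodForm B t) ((t • x, b) : L × ℤ) d ↔
          IsDivisibility (prodForm B t) ((t • x', b - t) : L × ℤ) d) ∧
        ∃ γ : (L × ℤ) ≃ₗ[ℤ] (L × ℤ), IsStableIsometry (prodForm B t) γ ∧
          γ ((t • x, b) : L × ℤ) = ((t • x', b - t) : L × ℤ)) ∧
    (∀ x : L, IsPrimitiveVec x → ∀ b : ℤ,
      ∃ (x' : L) (b' : ℤ), IsPrimitiveVec x' ∧ 2 * |b'| ≤ t ∧
        ∃ γ : (L × ℤ) ≃ₗ[ℤ] (L × ℤ), IsStableIsometry (prodForm B t) γ ∧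
          γ ((t • x, b) : L × ℤ) = ((t • x', b') : L × ℤ)) :=
  shift_b_modulo_t_general t ht hteven L B hsymm heven huni hUU
end

section
/- Let L be an even unimodular lattice containing U ⊕ U as an orthogonal direct summand, and let Λ = L ⊕ ℤe be the orthogonal direct sum with q(e) = −10. Let x ∈ L be a primitive vector with q(x) = 2 and set z = 2x − e. Then z is primitive, q(z) = −2, and for every γ ∈ Õ(Λ) the rank-2 sublattice of Λ spanned by γ(z) and e has negative Gram determinant; in particular it is never negative semidefinite. -/
open LinearMap (BilinForm)

/-- failure for `k = 6`, i.e. `t = 10`: in `Λ = L ⊕ ℤe`, `L` even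
unimodular containing `U ⊕ U`, `q(e) = -10`, for `x ∈ L` primitive of square 2 the
vector `z = 2x - e = (2•x, -1)` is primitive of square `-2`, and for every
`γ ∈ Õ(Λ)` the sublattice spanned by `γ(z)` and `e` has negative Gram determinant,
hence is never negative semidefinite. -/
theorem t10_counterexample
    (L : Type*) [AddCommGroup L] [Module ℤ L] [Module.Free ℤ L] [Module.Finite ℤ L]
    (B : BilinForm ℤ L) (hsymm : IsSymmForm B) (heven : IsEvenForm B)
    (huni : IsUnimodularForm B) (hUU : ContainsUU B)
    (x : L) (hx : IsPrimitiveVec x) (hxx : B x x = 2) :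
    IsPrimitiveVec (((2 : ℤ) • x, -1) : L × ℤ) ∧
    prodForm B 10 (((2 : ℤ) • x, -1) : L × ℤ) (((2 : ℤ) • x, -1) : L × ℤ) = -2 ∧
    ∀ γ : (L × ℤ) ≃ₗ[ℤ] (L × ℤ), IsStableIsometry (prodForm B 10) γ →
      GramDet (prodForm B 10) (γ (((2 : ℤ) • x, -1) : L × ℤ)) ((0 : L), (1 : ℤ)) < 0 ∧
      ¬ ∀ w ∈ Submodule.span ℤ
          ({γ (((2 : ℤ) • x, -1) : L × ℤ), ((0 : L), (1 : ℤ))} : Set (L × ℤ)),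
          prodForm B 10 w w ≤ 0 := by
  have hpf : ∀ p q : L × ℤ, prodForm B 10 p q = B p.1 q.1 - 10 * p.2 * q.2 :=
    fun p q => rfl
  set z : L × ℤ := (((2 : ℤ) • x, -1) : L × ℤ) with hz
  have hqz : prodForm B 10 z z = -2 := by
    rw [hpf]
    simp [hz, map_smul, smul_eq_mul, hxx]
  refine ⟨?_, hqz, ?_⟩
  · intro m w hw
    have h2 : (-1 : ℤ) = m * w.2 := congrArg Prod.snd hw
    have : m * (-w.2) = 1 := by rw [mul_neg]; omega
    exact Int.isUnit_iff.mp (IsUnit.of_mul_eq_one (a := m) (-w.2) this)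
  · intro γ ⟨hiso, hstab⟩
    set a : ℤ := (γ z).2 with ha
    have hqγz : prodForm B 10 (γ z) (γ z) = -2 := by rw [hiso]; exact hqz
    have hBγze : prodForm B 10 (γ z) ((0 : L), (1 : ℤ)) = -10 * a := by
      rw [hpf]; simp; rfl
    have hBeγz : prodForm B 10 ((0 : L), (1 : ℤ)) (γ z) = -10 * a := by
      rw [hpf]; simp; rfl
    have hBee : prodForm B 10 ((0 : L), (1 : ℤ)) ((0 : L), (1 : ℤ)) = -10 := by
      rw [hpf]; simp
    -- a is odd via stability
    obtain ⟨y, hy⟩ := hstab (LinearMap.snd ℤ L ℤ)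
    have hyz2 : a - (-1) = 2 * B y.1 x + 10 * y.2 := by
      have hyz := hy z
      rw [hpf] at hyz
      have hz1 : z.1 = (2:ℤ) • x := rfl
      have hz2 : z.2 = -1 := rfl
      rw [hz1, hz2] at hyz
      have h1 : B y.1 ((2:ℤ) • x) = (2:ℤ) * B y.1 x := by
        simp
      rw [h1] at hyz
      have hyz' : a - (-1) = 2 * B y.1 x - 10 * y.2 * (-1) := hyz
      linarith [hyz']
    have ha0 : a ≠ 0 := by
      intro h; rw [h] at hyz2; omega
    have h1 : 1 ≤ a ^ 2 := by rcases ha0.lt_or_gt with h | h <;> nlinarith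
    constructor
    · unfold GramDet
      rw [hqγz, hBγze, hBee]
      nlinarith
    · intro hns
      have hmem : (-5 * a) • γ z + ((0 : L), (1 : ℤ)) ∈
          Submodule.span ℤ ({γ z, ((0 : L), (1 : ℤ))} : Set (L × ℤ)) := by
        apply Submodule.add_mem
        · exact Submodule.smul_mem _ _ (Submodule.subset_span (by simp))
        · exact Submodule.subset_span (by simp)
      have hval : prodForm B 10 ((-5 * a) • γ z + ((0 : L), (1 : ℤ)))
          ((-5 * a) • γ z + ((0 : L), (1 : ℤ))) = 50 * a ^ 2 - 10 := by
        simp only [map_add, map_smul, LinearMap.add_apply, LinearMap.smul_apply,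
          smul_eq_mul, hqγz, hBγze, hBeγz, hBee]
        ring
      have := hns _ hmem
      rw [hval] at this
      nlinarith
end

section
/- Let L be an even unimodular lattice containing U ⊕ U as an orthogonal direct summand, and let Λ = L ⊕ ℤe be the orthogonal direct sum with q(e) = −2. If z ∈ Λ lies in the Õ(Λ)-orbit of e, then for every γ ∈ Õ(Λ) the sublattice of Λ spanned by γ(z) and e is not negative definite; that is, the exceptional clause in the k = 2 case of the main theorem is genuinely necessary. -/
open LinearMap (BilinForm)

/-- the exceptional clause for `k = 2` is necessary: in
`Λ = L ⊕ ℤe`, `L` even unimodular containing `U ⊕ U`, `q(e) = -2`, if `z` lies in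
the `Õ(Λ)`-orbit of `e`, then no `γ ∈ Õ(Λ)` makes the (rank-2) sublattice spanned
by `γ(z)` and `e` negative definite. -/
theorem exceptional_clause_is_necessary
    (L : Type*) [AddCommGroup L] [Module ℤ L] [Module.Free ℤ L] [Module.Finite ℤ L]
    (B : BilinForm ℤ L) (hsymm : IsSymmForm B) (heven : IsEvenForm B)
    (huni : IsUnimodularForm B) (hUU : ContainsUU B)
    (z : L × ℤ)
    (horbit : ∃ γ₀ : (L × ℤ) ≃ₗ[ℤ] (L × ℤ), IsStableIsometry (prodForm B 2) γ₀ ∧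
      γ₀ ((0 : L), (1 : ℤ)) = z) :
    ∀ γ : (L × ℤ) ≃ₗ[ℤ] (L × ℤ), IsStableIsometry (prodForm B 2) γ →
      ¬ NegDefPair (prodForm B 2) (γ z) ((0 : L), (1 : ℤ)) := by
  obtain ⟨γ₀, ⟨hiso₀, hstab₀⟩, hz⟩ := horbit
  intro γ ⟨hiso, hstab⟩ ⟨hind, hneg⟩
  set e : L × ℤ := ((0 : L), (1 : ℤ)) with he
  set v : L × ℤ := γ z with hv
  have hBform : ∀ a b : L × ℤ, prodForm B 2 a b = B a.1 b.1 - 2 * a.2 * b.2 := by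
    intro a b; rfl
  -- q(v) = -2
  have hqv : prodForm B 2 v v = -2 := by
    rw [hv, hiso, ← hz, hiso₀, hBform]
    simp [he]
  -- v.2 is odd (composite stable isometry applied at e)
  obtain ⟨x, hx⟩ := hstab₀ (LinearMap.snd ℤ L ℤ)
  obtain ⟨y, hy⟩ := hstab (LinearMap.snd ℤ L ℤ)
  set u : L × ℤ := γ₀.symm y + x with hu
  have hcomp : v.2 - 1 = prodForm B 2 u e := by
    have h1 := hy z
    have h2 := hx e
    rw [hz] at h2
    have h3 : prodForm B 2 y z = prodForm B 2 (γ₀.symm y) e := by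
      conv_lhs => rw [← γ₀.apply_symm_apply y, ← hz, hiso₀]
    rw [h3] at h1
    simp only [← hv] at h1
    rw [hu, map_add, LinearMap.add_apply]
    have h1' : v.2 - z.2 = prodForm B 2 (γ₀.symm y) e := h1
    have h2' : z.2 - 1 = prodForm B 2 x e := h2
    linarith
  have hce : prodForm B 2 u e = -2 * u.2 := by rw [hBform]; simp [he]
  set c : ℤ := v.2 with hc
  have hcodd : c = 1 - 2 * u.2 := by rw [hc]; rw [hce] at hcomp; omega
  -- B(v, e) = -2 c
  have hBve : prodForm B 2 v e = -2 * c := by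
    rw [hBform]; simp [he]; rfl
  have hBev : prodForm B 2 e v = -2 * c := by
    rw [hBform]; simp [he, hsymm]; rfl
  have hBee : prodForm B 2 e e = -2 := by rw [hBform]; simp [he]
  set w : L × ℤ := v - c • e with hw
  have hmem : w ∈ Submodule.span ℤ ({v, e} : Set (L × ℤ)) := by
    apply Submodule.sub_mem
    · exact Submodule.subset_span (by simp)
    · exact Submodule.smul_mem _ _ (Submodule.subset_span (by simp))
  have hqw : prodForm B 2 w w = 2 * c ^ 2 - 2 := by
    rw [hw]
    simp only [map_sub, map_smul, LinearMap.sub_apply, LinearMap.smul_apply, smul_eq_mul]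
    rw [hqv, hBve, hBev, hBee]
    ring
  by_cases hw0 : w = 0
  · -- v = c • e contradicts linear independence
    have hvce : v = c • e := by rwa [hw, sub_eq_zero] at hw0
    have := Fintype.linearIndependent_iff.mp hind ![1, -c] ?_ 0
    · simp at this
    · simp [Fin.sum_univ_two, ← hv, hvce]
  · have h1 := hneg w hmem hw0
    rw [hqw] at h1
    have hc1 : c ≠ 0 := by omega
    nlinarith [sq_nonneg c, sq_abs c, abs_pos.mpr hc1]
end
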